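/- arXiv:0711.4074 — 7 statements merged into one kernel-verified Lean document; each statement's English description precedes it below -/
import Mathlib

section
/- Let G be a finite abelian group of order n. Every sequence x = (x_1, ..., x_n) of n elements of G in which each element of G occurs at most k times has a nonempty zero-sum subsequence of length at most k. -/
open Finset Pointwise

/-- Scherk's theorem: if `0` has a unique representation as a sum `a + b` with
`a ∈ A`, `b ∈ B`, then `|A| + |B| ≤ |A + B| + 1`. Proved by induction on `|B|`
using the Dyson transform. -/
private lemma scherk_aux {G : Type*} [AddCommGroup G] [Fintype G] [DecidableEq G] :
    ∀ N : ℕ, ∀ A B : Finset G, B.card ≤ N → (0:G) ∈ A → (0:G) ∈ B →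
      (∀ a ∈ A, ∀ b ∈ B, a + b = 0 → a = 0) →
      A.card + B.card ≤ (A + B).card + 1 := by
  intro N
  induction N with
  | zero =>
    intro A B hB h0A h0B _
    have := Finset.card_pos.mpr ⟨(0:G), h0B⟩
    omega
  | succ N ih =>
    intro A B hBN h0A h0B huniq
    by_cases hstuck : ∀ e ∈ A, e ≠ 0 → ∀ b ∈ B, b + e ∈ A
    · -- "stuck" case : A + B = A ∪ B  and  A ∩ B = {0}
      have hABU : A + B = A ∪ B := by
        apply Finset.Subset.antisymm
        · intro z hz
          rw [Finset.mem_add] at hz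
          obtain ⟨a, ha, b, hb, rfl⟩ := hz
          by_cases h0 : a = 0
          · subst h0; rw [zero_add]; exact mem_union_right _ hb
          · rw [add_comm]; exact mem_union_left _ (hstuck a ha h0 b hb)
        · apply union_subset
          · intro a ha; rw [Finset.mem_add]; exact ⟨a, ha, 0, h0B, add_zero a⟩
          · intro b hb; rw [Finset.mem_add]; exact ⟨0, h0A, b, hb, zero_add b⟩
      have hinter : A ∩ B = {0} := by
        apply Finset.Subset.antisymm
        · intro e he
          rw [mem_inter] at he
          rw [mem_singleton]
          by_contra hne
          set d := addOrderOf e with hd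
          have hdpos : 0 < d := addOrderOf_pos e
          have hd1 : d ≠ 1 := by
            intro h
            exact hne (AddMonoid.addOrderOf_eq_one_iff.mp h)
          have key : ∀ c, 1 ≤ c → c < d → c • e ∈ A := by
            intro c
            induction c with
            | zero => omega
            | succ c ihc =>
              intro _ hcd
              rcases Nat.eq_zero_or_pos c with rfl | hc
              · simpa using he.1
              · have hce : c • e ∈ A := ihc hc (by omega)
                have hcne : c • e ≠ 0 := by
                  intro h
                  have hdvd := addOrderOf_dvd_of_nsmul_eq_zero h
                  have := Nat.le_of_dvd hc hdvd
                  omega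
                have hmem := hstuck (c • e) hce hcne e he.2
                rw [succ_nsmul, add_comm]
                exact hmem
          have hA1 : (d - 1) • e ∈ A := key (d-1) (by omega) (by omega)
          have hsum : (d - 1) • e + e = 0 := by
            rw [← succ_nsmul]
            have hdd : d - 1 + 1 = d := by omega
            rw [hdd, hd]
            exact addOrderOf_nsmul_eq_zero e
          have h0 := huniq _ hA1 e he.2 hsum
          rw [h0, zero_add] at hsum
          exact hne hsum
        · intro z hz
          rw [mem_singleton] at hz
          subst hz
          exact mem_inter.mpr ⟨h0A, h0B⟩
      have hcui := Finset.card_union_add_card_inter A B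
      rw [hinter, card_singleton] at hcui
      rw [hABU]
      omega
    · -- transform case
      push_neg at hstuck
      obtain ⟨e, heA, hene, b0, hb0, hb0e⟩ := hstuck
      set B' := B.filter (fun b => b + e ∈ A) with hB'
      set A' := A ∪ B.image (fun b => b + e) with hA'
      have hinj : Function.Injective (fun b : G => b + e) := add_left_injective e
      have hAcap : A ∩ B.image (fun b => b + e) = B'.image (fun b => b + e) := by
        ext y
        simp only [mem_inter, Finset.mem_image, hB', mem_filter]
        constructor
        · rintro ⟨hyA, b, hbB, rfl⟩; exact ⟨b, ⟨hbB, hyA⟩, rfl⟩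
        · rintro ⟨b, ⟨hbB, hbA⟩, rfl⟩; exact ⟨hbA, b, hbB, rfl⟩
      have hcards : A'.card + B'.card = A.card + B.card := by
        have h1 := Finset.card_union_add_card_inter A (B.image (fun b => b + e))
        rw [hAcap, Finset.card_image_of_injective _ hinj,
          Finset.card_image_of_injective _ hinj] at h1
        rw [hA']
        exact h1
      have hB'lt : B'.card < B.card := by
        apply card_lt_card
        constructor
        · exact filter_subset _ _
        · intro hsub
          exact hb0e ((mem_filter.mp (hsub hb0)).2)
      have h0A' : (0:G) ∈ A' := mem_union_left _ h0A
      have h0B' : (0:G) ∈ B' := mem_filter.mpr ⟨h0B, by simpa using heA⟩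
      have hsub : A' + B' ⊆ A + B := by
        intro z hz
        rw [Finset.mem_add] at hz ⊢
        obtain ⟨a', ha', b', hb', rfl⟩ := hz
        have hb'B : b' ∈ B := (mem_filter.mp hb').1
        have hb'eA : b' + e ∈ A := (mem_filter.mp hb').2
        rcases mem_union.mp ha' with h | h
        · exact ⟨a', h, b', hb'B, rfl⟩
        · obtain ⟨b, hbB, rfl⟩ := mem_image.mp h
          exact ⟨b' + e, hb'eA, b, hbB, by abel⟩
      have huniq' : ∀ a ∈ A', ∀ b ∈ B', a + b = 0 → a = 0 := by
        intro a' ha' b' hb' hab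
        have hb'B : b' ∈ B := (mem_filter.mp hb').1
        rcases mem_union.mp ha' with h | h
        · exact huniq a' h b' hb'B hab
        · exfalso
          obtain ⟨b, hbB, rfl⟩ := mem_image.mp h
          have hb'eA : b' + e ∈ A := (mem_filter.mp hb').2
          have h2 : (b' + e) + b = 0 := by rw [← hab]; abel
          have h3 := huniq _ hb'eA b hbB h2
          have h4 : e + b' = 0 := by rw [add_comm]; exact h3
          exact hene (huniq e heA b' hb'B h4)
      have hih := ih A' B' (by omega) h0A' h0B' huniq'
      have hle : (A' + B').card ≤ (A + B).card := card_le_card hsub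
      omega

/-- The chain of sumsets `P 0 = {0}`, `P (m+1) = P m + C (m+1)`. -/
private def Pchain {G : Type*} [AddCommGroup G] [DecidableEq G]
    (C : ℕ → Finset G) : ℕ → Finset G
  | 0 => {0}
  | m+1 => Pchain C m + C (m+1)

/-- Every element of `Pchain C m` is a sum of a subsequence of length at most `m`,
provided every nonzero element of `C j` has multiplicity at least `j` in `x`. -/
private lemma Pchain_rep {G : Type*} [AddCommGroup G] [DecidableEq G] {n : ℕ}
    (x : Fin n → G) (C : ℕ → Finset G)
    (hC : ∀ j, ∀ a ∈ C j, a = 0 ∨ j ≤ (Finset.univ.filter (fun i => x i = a)).card) :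
    ∀ m, ∀ p ∈ Pchain C m, ∃ I : Finset (Fin n), I.card ≤ m ∧ ∑ i ∈ I, x i = p := by
  intro m
  induction m with
  | zero =>
    intro p hp
    rw [Pchain, mem_singleton] at hp
    exact ⟨∅, by simp, by simp [hp.symm]⟩
  | succ m ihm =>
    intro p hp
    rw [Pchain, Finset.mem_add] at hp
    obtain ⟨q, hq, c, hc, rfl⟩ := hp
    obtain ⟨I', hI'c, hI's⟩ := ihm q hq
    rcases hC (m+1) c hc with rfl | hmc
    · exact ⟨I', by omega, by rw [hI's, add_zero]⟩
    · have hnotsub : ¬ (Finset.univ.filter (fun i => x i = c)) ⊆ I' := by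
        intro hsubs
        have := card_le_card hsubs
        omega
      obtain ⟨i, hi_mem, hi_not⟩ := Finset.not_subset.mp hnotsub
      have hxi : x i = c := (mem_filter.mp hi_mem).2
      refine ⟨insert i I', ?_, ?_⟩
      · rw [card_insert_of_notMem hi_not]; omega
      · rw [Finset.sum_insert hi_not, hI's, hxi, add_comm]

theorem stmt_0 {G : Type*} [AddCommGroup G] [Fintype G] [DecidableEq G] (n k : ℕ)
    (hn : Fintype.card G = n) (x : Fin n → G)
    (hrep : ∀ a : G, (Finset.univ.filter (fun i => x i = a)).card ≤ k) :
    ∃ I : Finset (Fin n), I.Nonempty ∧ I.card ≤ k ∧ ∑ i ∈ I, x i = 0 := by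
  classical
  -- multiplicity function
  set mult : G → ℕ := fun a => (Finset.univ.filter (fun i => x i = a)).card with hmult
  by_cases hz : ∃ i, x i = 0
  · obtain ⟨i, hi⟩ := hz
    have h1k : 1 ≤ k := by
      have h1 : 1 ≤ mult (x i) := Finset.card_pos.mpr ⟨i, by simp⟩
      exact le_trans h1 (hrep (x i))
    exact ⟨{i}, singleton_nonempty i, by simpa using h1k, by simp [hi]⟩
  push_neg at hz
  by_contra hno
  push_neg at hno
  -- hno : ∀ I, I.Nonempty → I.card ≤ k → ∑ i ∈ I, x i ≠ 0
  set Bs : ℕ → Finset G := fun j => Finset.univ.filter (fun a => j ≤ mult a) with hBs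
  set C : ℕ → Finset G := fun j => insert (0:G) (Bs j) with hC
  have hCprop : ∀ j, ∀ a ∈ C j, a = 0 ∨ j ≤ (Finset.univ.filter (fun i => x i = a)).card := by
    intro j a ha
    rcases mem_insert.mp ha with rfl | h
    · exact Or.inl rfl
    · exact Or.inr (mem_filter.mp h).2
  have h0P : ∀ m, (0:G) ∈ Pchain C m := by
    intro m
    induction m with
    | zero => rw [Pchain]; exact mem_singleton_self 0
    | succ m ihm =>
      rw [Pchain, Finset.mem_add]
      exact ⟨0, ihm, 0, mem_insert_self 0 _, add_zero 0⟩
  have h0B : ∀ j, 1 ≤ j → (0:G) ∉ Bs j := by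
    intro j hj h
    have h2 := (mem_filter.mp h).2
    have h3 : mult 0 = 0 := by
      rw [hmult]
      simp only [Finset.card_eq_zero]
      rw [Finset.filter_eq_empty_iff]
      intro i _
      exact hz i
    omega
  -- growth step via Scherk
  have hgrow : ∀ m, m < k →
      (Pchain C m).card + (Bs (m+1)).card ≤ (Pchain C (m+1)).card := by
    intro m hm
    have huniq : ∀ a ∈ Pchain C m, ∀ b ∈ C (m+1), a + b = 0 → a = 0 := by
      intro a ha b hb hab
      rcases mem_insert.mp hb with rfl | hbB
      · rwa [add_zero] at hab
      · exfalso
        obtain ⟨I', hI'c, hI's⟩ := Pchain_rep x C hCprop m a ha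
        have hmc : m + 1 ≤ mult b := (mem_filter.mp hbB).2
        have hnotsub : ¬ (Finset.univ.filter (fun i => x i = b)) ⊆ I' := by
          intro hsubs
          have h5 : mult b ≤ I'.card := card_le_card hsubs
          omega
        obtain ⟨i, hi_mem, hi_not⟩ := Finset.not_subset.mp hnotsub
        have hxi : x i = b := (mem_filter.mp hi_mem).2
        apply hno (insert i I') ⟨i, mem_insert_self i I'⟩
        · rw [card_insert_of_notMem hi_not]; omega
        · have hba : b + a = 0 := by rw [add_comm]; exact hab
          rw [Finset.sum_insert hi_not, hI's, hxi]
          exact hba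
    have hsch := scherk_aux (C (m+1)).card (Pchain C m) (C (m+1)) le_rfl
      (h0P m) (mem_insert_self 0 _) huniq
    have hCcard : (C (m+1)).card = (Bs (m+1)).card + 1 :=
      card_insert_of_notMem (h0B (m+1) (by omega))
    have hPdef : Pchain C (m+1) = Pchain C m + C (m+1) := rfl
    rw [hPdef]
    omega
  -- chain lower bound
  have hchain : ∀ m, m ≤ k →
      1 + ∑ j ∈ Finset.range m, (Bs (j+1)).card ≤ (Pchain C m).card := by
    intro m
    induction m with
    | zero =>
      intro _
      rw [Pchain]
      simp
    | succ m ihm =>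
      intro hmk
      have h1 := ihm (by omega)
      have h2 := hgrow m (by omega)
      rw [Finset.sum_range_succ]
      omega
  -- total count : ∑_{j<k} |B (j+1)| = n
  have hmultsum : ∑ a : G, mult a = n := by
    have := Finset.card_eq_sum_card_fiberwise (f := x) (s := Finset.univ) (t := Finset.univ)
      (fun i _ => mem_univ (x i))
    rw [Finset.card_univ, Fintype.card_fin] at this
    exact this.symm
  have hBsum : ∑ j ∈ Finset.range k, (Bs (j+1)).card = n := by
    have h1 : ∀ j, (Bs j).card = ∑ a : G, if j ≤ mult a then 1 else 0 := by
      intro j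
      rw [hBs]
      simp only
      rw [Finset.card_filter]
    calc ∑ j ∈ Finset.range k, (Bs (j+1)).card
        = ∑ j ∈ Finset.range k, ∑ a : G, if j + 1 ≤ mult a then 1 else 0 := by
          exact Finset.sum_congr rfl fun j _ => h1 (j+1)
      _ = ∑ a : G, ∑ j ∈ Finset.range k, if j + 1 ≤ mult a then 1 else 0 :=
          Finset.sum_comm
      _ = ∑ a : G, mult a := by
          apply Finset.sum_congr rfl
          intro a _
          rw [← Finset.card_filter]
          have hak : mult a ≤ k := hrep a
          have : (Finset.range k).filter (fun j => j + 1 ≤ mult a) = Finset.range (mult a) := by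
            ext j
            simp only [mem_filter, Finset.mem_range]
            omega
          rw [this, Finset.card_range]
      _ = n := hmultsum
  have hfin := hchain k le_rfl
  rw [hBsum] at hfin
  have hPk : (Pchain C k).card ≤ n := by
    rw [← hn, ← Finset.card_univ]
    exact card_le_univ _
  omega
end

section
/- Let G be a finite abelian group of order n. Let x = (x_1, ..., x_n) be a sequence in G^n with maximal repetition at most ℓ, and let w = (w_1, ..., w_n) be a sequence of integers. Then there exist a subset I of [1, n] with 1 ≤ |I| ≤ ℓ and an injection f: I → [1, n] such that ∑_{i ∈ I} w_i · x_{f(i)} = 0. -/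
/-!
Let `L` be the largest repetition in `x` and `e` the exponent of `G`, so that `w • y` only depends
on `w` mod `e`. Either some residue class of weights has at least `L` members, or an element `v`
occurs `L` times in `x` while every weight class has at most `L` members. Accordingly take
`φ : G → G, y ↦ c • y` with `B j` the elements occurring more than `j` times, or
`φ : ZMod e → G, r ↦ r • v` with `B j` the weight classes of size more than `j`. In both cases the
source of `φ` has at most `∑ j < L, |B j|` elements, and every element of `φ (B j)` can be appended
to any injective sum of at most `j` terms. If no injective zero sum of `1, …, L` terms existed,
Scherk's theorem would make the sumsets `N j = ∑ i < j, ({0} ∪ φ (B i))`, all consisting of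
such sums, grow by `|φ (B j)|` at each step, so that `|N L| > ∑ j < L, |φ (B j)| ≥ |range φ|`,
although `N L ⊆ range φ`.
-/

open Finset Pointwise

section

variable {G : Type*} [AddCommGroup G]

namespace Finset

variable [DecidableEq G]

/-- Scherk's theorem. Induct on `B` along Dyson e-transforms; when none applies, `S.erase 0` is
stable under translation by every element of `B`, hence meets `B` trivially. -/
theorem card_add_card_le_card_add_add_one {S B : Finset G} (hS : 0 ∈ S) (hB : 0 ∈ B)
    (h : ∀ s ∈ S, ∀ b ∈ B, s + b = 0 → s = 0) : #S + #B ≤ #(S + B) + 1 := by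
  induction B using Finset.strongInduction generalizing S with
  | H B ih =>
  by_cases hstep : ∃ e ∈ S, e ≠ 0 ∧ ¬ e +ᵥ B ⊆ S
  · obtain ⟨e, heS, he0, hBS⟩ := hstep
    set T := addDysonETransform e (S, B)
    have hT₂ : T.2 ⊂ B := by
      refine ssubset_of_subset_of_ne inter_subset_left fun hTB => hBS ?_
      rw [← hTB, addDysonETransform_snd, vadd_finset_inter, vadd_neg_vadd]
      exact inter_subset_right
    have h0T : 0 ∈ T.2 := mem_inter.2 ⟨hB, mem_vadd_finset.2 ⟨e, heS, neg_add_cancel e⟩⟩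
    have hT : ∀ s ∈ T.1, ∀ b ∈ T.2, s + b = 0 → s = 0 := by
      intro s hs b hb hsb
      obtain ⟨hbB, hbS⟩ := mem_inter.1 hb
      obtain ⟨c, hcS, rfl⟩ := mem_vadd_finset.1 hbS
      rcases mem_union.1 hs with hsS | hsB
      · exact h s hsS _ hbB hsb
      · obtain ⟨d, hdB, rfl⟩ := mem_vadd_finset.1 hsB
        have hc : c = 0 := h c hcS d hdB <| by
          simp only [vadd_eq_add] at hsb ⊢
          linear_combination (norm := abel) hsb
        subst hc
        exact absurd (h e heS _ hbB (by simp)) he0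
    have hind : #T.1 + #T.2 ≤ #(T.1 + T.2) + 1 := ih _ hT₂ (subset_union_left hS) h0T hT
    have hcard : #T.1 + #T.2 = #S + #B := addDysonETransform.card e (S, B)
    have hsub : #(T.1 + T.2) ≤ #(S + B) := card_le_card (addDysonETransform.subset e (S, B))
    omega
  · push Not at hstep
    set S₀ := S.erase 0
    have hclosed : ∀ s ∈ S₀, ∀ b ∈ B, s + b ∈ S₀ := by
      intro s hs b hb
      obtain ⟨hs0, hsS⟩ := mem_erase.1 hs
      refine mem_erase.2 ⟨fun hsb => hs0 (h s hsS b hb hsb), hstep s hsS hs0 ?_⟩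
      exact mem_vadd_finset.2 ⟨b, hb, rfl⟩
    have hdisj : Disjoint S₀ B := by
      refine disjoint_left.2 fun z hzS hzB => ?_
      have himage : S₀.image (· + z) = S₀ :=
        eq_of_subset_of_card_le (image_subset_iff.2 fun s hs => hclosed s hs z hzB)
          (card_image_of_injective _ (add_left_injective z)).ge
      obtain ⟨s, hs, hsz⟩ := mem_image.1 (himage.symm ▸ hzS)
      exact (mem_erase.1 hs).1 (by simpa using hsz)
    have hsub : S₀ ∪ B ⊆ S + B := union_subset
      (fun s hs => by simpa using add_mem_add (mem_of_mem_erase hs) hB)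
      (fun b hb => by simpa using add_mem_add hS hb)
    have hle := card_le_card hsub
    rw [card_union_of_disjoint hdisj] at hle
    have hS₀ : #S₀ + 1 = #S := card_erase_add_one hS
    omega

theorem zero_mem_sum_insert_zero (A : ℕ → Finset G) (s : Finset ℕ) :
    (0 : G) ∈ ∑ j ∈ s, insert 0 (A j) :=
  sum_induction _ (fun T => (0 : G) ∈ T) (fun _ _ ha hb => by simpa using add_mem_add ha hb)
    (mem_singleton_self 0) fun _ _ => mem_insert_self _ _

theorem sum_insert_zero_subset {K : Finset G} (hK₀ : 0 ∈ K) (hK : ∀ a ∈ K, ∀ b ∈ K, a + b ∈ K)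
    {A : ℕ → Finset G} {s : Finset ℕ} (hA : ∀ j ∈ s, A j ⊆ K) :
    ∑ j ∈ s, insert 0 (A j) ⊆ K := by
  refine sum_induction _ (· ⊆ K) (fun T U hT hU => ?_) (singleton_subset_iff.2 hK₀)
    fun j hj => insert_subset hK₀ (hA j hj)
  intro z hz
  obtain ⟨a, ha, b, hb, rfl⟩ := mem_add.1 hz
  exact hK a (hT ha) b (hU hb)

theorem add_one_sum_card_le_card_sum_insert_zero (A : ℕ → Finset G) (L : ℕ)
    (h : ∀ j < L, ∀ s ∈ ∑ i ∈ range j, insert 0 (A i), ∀ a ∈ A j, s + a ≠ 0) :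
    1 + ∑ j ∈ range L, #(A j) ≤ #(∑ j ∈ range L, insert 0 (A j)) := by
  induction L with
  | zero => simp
  | succ L ih =>
    have hN₀ := zero_mem_sum_insert_zero A (range L)
    have hA₀ : (0 : G) ∉ A L := fun h₀ => h L L.lt_succ_self 0 hN₀ 0 h₀ (add_zero 0)
    have hscherk := card_add_card_le_card_add_add_one hN₀ (mem_insert_self 0 (A L))
      fun s hs b hb hsb => by
        rcases mem_insert.1 hb with rfl | hb
        · simpa using hsb
        · exact absurd hsb (h L L.lt_succ_self s hs b hb)
    rw [card_insert_of_notMem hA₀] at hscherk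
    rw [sum_range_succ, sum_range_succ]
    have hih := ih fun j hj => h j (Nat.lt_succ_of_lt hj)
    omega

theorem exists_mem_sum_insert_zero_add_eq_zero {K : Finset G} (hK₀ : 0 ∈ K)
    (hK : ∀ a ∈ K, ∀ b ∈ K, a + b ∈ K) {A : ℕ → Finset G} {L : ℕ} (hA : ∀ j < L, A j ⊆ K)
    (hcard : #K ≤ ∑ j ∈ range L, #(A j)) :
    ∃ j < L, ∃ s ∈ ∑ i ∈ range j, insert 0 (A i), ∃ a ∈ A j, s + a = 0 := by
  by_contra! h
  have hgrow := add_one_sum_card_le_card_sum_insert_zero A L h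
  have hsub := card_le_card (sum_insert_zero_subset hK₀ hK fun j hj => hA j (mem_range.1 hj))
  omega

theorem sum_range_card_filter_lt {α : Type*} (s : Finset α) {m : α → ℕ} {L : ℕ}
    (hm : ∀ a ∈ s, m a ≤ L) : ∑ j ∈ range L, #{a ∈ s | j < m a} = ∑ a ∈ s, m a := by
  simp_rw [card_filter]
  rw [sum_comm]
  refine sum_congr rfl fun a ha => ?_
  rw [sum_boole, Nat.cast_id]
  convert card_range (m a) using 2
  ext j
  simp only [mem_filter, mem_range]
  have := hm a ha
  omega

theorem sum_range_card_filter_lt_card_fiber {α β : Type*} [Fintype α] [Fintype β]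
    [DecidableEq β] (g : α → β) {L : ℕ} (hg : ∀ a, #{a' | g a' = g a} ≤ L) :
    ∑ j ∈ range L, #{b | j < #{a | g a = b}} = Fintype.card α := by
  rw [sum_range_card_filter_lt, ← card_univ (α := α),
    card_eq_sum_card_fiberwise (f := g) fun _ _ => mem_univ _]
  intro b _
  by_cases hb : ∃ a, g a = b
  · obtain ⟨a, rfl⟩ := hb
    exact hg a
  · simp [filter_eq_empty_iff.2 fun a _ => not_exists.1 hb a]

end Finset

theorem AddMonoidHom.card_image_univ_le_sum_card_image [DecidableEq G] {M : Type*} [AddGroup M]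
    [Fintype M] (φ : M →+ G) {s : Finset ℕ} {B : ℕ → Finset M}
    (h : Fintype.card M ≤ ∑ j ∈ s, #(B j)) :
    #(univ.image φ) ≤ ∑ j ∈ s, #((B j).image φ) := by
  set κ := #{m | φ m = 0}
  have hfiber : ∀ y ∈ univ.image φ, #{m | φ m = y} = κ := fun y hy =>
    card_fiber_eq_of_mem_range φ (by simpa using hy) ⟨0, map_zero φ⟩
  have hM : κ * #(univ.image φ) ≤ Fintype.card M :=
    mul_card_image_le_card_of_maps_to (fun m _ => mem_image_of_mem φ (mem_univ m)) κ
      fun y hy => (hfiber y hy).ge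
  have hB : ∀ j, #(B j) ≤ κ * #((B j).image φ) := fun j =>
    card_le_mul_card_image _ κ fun y hy =>
      (card_le_card (filter_subset_filter _ (subset_univ _))).trans
        (hfiber y (image_subset_image (subset_univ _) hy)).le
  have hκ : 0 < κ := card_pos.2 ⟨0, by simp⟩
  refine Nat.le_of_mul_le_mul_left ?_ hκ
  calc κ * #(univ.image φ) ≤ ∑ j ∈ s, #(B j) := hM.trans h
    _ ≤ κ * ∑ j ∈ s, #((B j).image φ) := by rw [mul_sum]; exact sum_le_sum fun j _ => hB j

section InjSum

variable {ι κ : Type*} (w : ι → ℤ) (x : κ → G)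

def IsInjSum (k : ℕ) (s : G) : Prop :=
  ∃ (I : Finset ι) (f : ι → κ), #I = k ∧ Set.InjOn f I ∧ ∑ i ∈ I, w i • x (f i) = s

def IsAppendable (j : ℕ) (a : G) : Prop :=
  ∃ (W : Finset ι) (T : Finset κ), j < #W ∧ j < #T ∧ ∀ i ∈ W, ∀ t ∈ T, w i • x t = a

variable {w x}

theorem isInjSum_zero [Nonempty κ] : IsInjSum w x 0 0 :=
  ⟨∅, fun _ => Classical.arbitrary κ, rfl, by simp, sum_empty⟩

variable [DecidableEq ι] [DecidableEq κ]

theorem IsInjSum.add {k j : ℕ} {s a : G} (hs : IsInjSum w x k s) (hkj : k ≤ j)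
    (ha : IsAppendable w x j a) : IsInjSum w x (k + 1) (s + a) := by
  obtain ⟨I, f, rfl, hf, rfl⟩ := hs
  obtain ⟨W, T, hW, hT, hWT⟩ := ha
  obtain ⟨i, hiW, hiI⟩ := exists_mem_notMem_of_card_lt_card (hkj.trans_lt hW)
  obtain ⟨t, htT, htI⟩ := exists_mem_notMem_of_card_lt_card
    ((card_image_le.trans hkj).trans_lt hT)
  have hfI : Set.EqOn (Function.update f i t) f I := fun k hk =>
    Function.update_of_ne (ne_of_mem_of_not_mem hk hiI) _ _
  refine ⟨insert i I, Function.update f i t, card_insert_of_notMem hiI, ?_, ?_⟩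
  · rw [coe_insert, Set.injOn_insert (mem_coe.not.2 hiI), hfI.injOn_iff, hfI.image_eq,
      Function.update_self]
    exact ⟨hf, by simpa using htI⟩
  · rw [sum_insert hiI, sum_congr rfl fun k hk => by rw [hfI hk], Function.update_self,
      hWT i hiW t htT, add_comm]

theorem IsInjSum.exists_of_mem_sum_insert_zero [DecidableEq G] [Nonempty κ]
    {A : ℕ → Finset G} {j : ℕ}
    (hA : ∀ i < j, ∀ a ∈ A i, IsAppendable w x i a) {s : G}
    (hs : s ∈ ∑ i ∈ range j, insert 0 (A i)) : ∃ k ≤ j, IsInjSum w x k s := by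
  induction j generalizing s with
  | zero => exact ⟨0, le_rfl, by simpa [mem_zero.1 hs] using isInjSum_zero⟩
  | succ j ih =>
    rw [sum_range_succ] at hs
    obtain ⟨s', hs', a, ha, rfl⟩ := mem_add.1 hs
    obtain ⟨k, hkj, hk⟩ := ih (fun i hi => hA i (Nat.lt_succ_of_lt hi)) hs'
    rcases mem_insert.1 ha with rfl | ha
    · exact ⟨k, hkj.trans j.le_succ, by simpa using hk⟩
    · exact ⟨k + 1, Nat.succ_le_succ hkj, hk.add hkj (hA j j.lt_succ_self a ha)⟩

end InjSum

section ZeroSum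

variable {ι κ : Type*} [DecidableEq ι] [DecidableEq κ] [Nonempty κ] {w : ι → ℤ} {x : κ → G}

theorem exists_isInjSum_zero_of_addMonoidHom [DecidableEq G] {M : Type*} [AddGroup M]
    [Fintype M] (φ : M →+ G) {L : ℕ} {B : ℕ → Finset M}
    (hB : Fintype.card M ≤ ∑ j ∈ range L, #(B j))
    (happ : ∀ j < L, ∀ m ∈ B j, IsAppendable w x j (φ m)) :
    ∃ k, 1 ≤ k ∧ k ≤ L ∧ IsInjSum w x k 0 := by
  obtain ⟨j, hj, s, hs, a, ha, hsa⟩ := exists_mem_sum_insert_zero_add_eq_zero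
    (K := univ.image φ) (A := fun j => (B j).image φ) (mem_image.2 ⟨0, mem_univ _, map_zero φ⟩)
    (fun a ha b hb => by
      obtain ⟨m, -, rfl⟩ := mem_image.1 ha
      obtain ⟨m', -, rfl⟩ := mem_image.1 hb
      exact mem_image.2 ⟨m + m', mem_univ _, map_add φ m m'⟩)
    (fun j _ => image_subset_image (subset_univ _)) (φ.card_image_univ_le_sum_card_image hB)
  obtain ⟨k, hkj, hk⟩ := IsInjSum.exists_of_mem_sum_insert_zero (fun i hi a ha => by
    obtain ⟨m, hm, rfl⟩ := mem_image.1 ha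
    exact happ i (hi.trans hj) m hm) hs
  obtain ⟨m, hm, rfl⟩ := mem_image.1 ha
  exact ⟨k + 1, k.succ_pos, by omega, hsa ▸ hk.add hkj (happ j hj m hm)⟩

end ZeroSum

theorem exists_zmod_exponent_addMonoidHom (y : G) :
    ∃ χ : ZMod (AddMonoid.exponent G) →+ G, ∀ k : ℤ, χ k = k • y :=
  ⟨ZMod.lift _ ⟨zmultiplesHom G y, by simp [AddMonoid.exponent_nsmul_eq_zero]⟩,
    fun k => ZMod.lift_coe _ _ k⟩

theorem zsmul_eq_zsmul_of_intCast_eq {k k' : ℤ} (h : (k : ZMod (AddMonoid.exponent G)) = k')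
    (y : G) : k • y = k' • y := by
  obtain ⟨χ, hχ⟩ := exists_zmod_exponent_addMonoidHom y
  rw [← hχ, ← hχ, h]

section Cases

variable [DecidableEq G] {ι κ : Type*} [Fintype ι] [Fintype κ] [DecidableEq ι] [DecidableEq κ]
  [Nonempty κ] {w : ι → ℤ} {x : κ → G} {L : ℕ}

theorem exists_isInjSum_zero_of_le_card_weight_class [Fintype G]
    (hx : ∀ t, #{t' | x t' = x t} ≤ L) {c : ℤ}
    (hc : L ≤ #{i | (w i : ZMod (AddMonoid.exponent G)) = c})
    (hG : Fintype.card G ≤ Fintype.card κ) :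
    ∃ k, 1 ≤ k ∧ k ≤ L ∧ IsInjSum w x k 0 := by
  refine exists_isInjSum_zero_of_addMonoidHom (zsmulAddGroupHom c)
    (B := fun j => {v | j < #{t | x t = v}}) ?_ fun j hj v hv => ?_
  · rwa [sum_range_card_filter_lt_card_fiber x hx]
  · refine ⟨_, _, hj.trans_le hc, (mem_filter.1 hv).2, fun i hi t ht => ?_⟩
    rw [(mem_filter.1 ht).2, zsmul_eq_zsmul_of_intCast_eq (mem_filter.1 hi).2]
    rfl

theorem exists_isInjSum_zero_of_card_weight_class_le [Finite G] {v : G}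
    (hv : L ≤ #{t | x t = v})
    (hw : ∀ i, #{i' | (w i' : ZMod (AddMonoid.exponent G)) = w i} ≤ L)
    (he : AddMonoid.exponent G ≤ Fintype.card ι) :
    ∃ k, 1 ≤ k ∧ k ≤ L ∧ IsInjSum w x k 0 := by
  obtain ⟨χ, hχ⟩ := exists_zmod_exponent_addMonoidHom v
  refine exists_isInjSum_zero_of_addMonoidHom χ
    (B := fun j => {r | j < #{i | (w i : ZMod (AddMonoid.exponent G)) = r}}) ?_
    fun j hj r hr => ?_
  · rwa [sum_range_card_filter_lt_card_fiber _ hw, ZMod.card]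
  · refine ⟨_, _, (mem_filter.1 hr).2, hj.trans_le hv, fun i hi t ht => ?_⟩
    rw [(mem_filter.1 ht).2, ← hχ, (mem_filter.1 hi).2]

end Cases

end

theorem stmt_1 {G : Type*} [AddCommGroup G] [Fintype G] [DecidableEq G] (n ℓ : ℕ)
    (hn : Fintype.card G = n) (x : Fin n → G) (w : Fin n → ℤ)
    (hrep : ∀ a : G, (Finset.univ.filter (fun i => x i = a)).card ≤ ℓ) :
    ∃ (I : Finset (Fin n)) (f : Fin n → Fin n),
      1 ≤ I.card ∧ I.card ≤ ℓ ∧ Set.InjOn f I ∧ ∑ i ∈ I, w i • x (f i) = 0 := by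
  have hn₀ : 0 < n := hn ▸ Fintype.card_pos
  have : Nonempty (Fin n) := ⟨⟨0, hn₀⟩⟩
  obtain ⟨t₀, -, hmax⟩ := exists_max_image univ (fun t => #{t' | x t' = x t}) univ_nonempty
  obtain ⟨k, hk₁, hkL, I, f, rfl, hf, hsum⟩ :
      ∃ k, 1 ≤ k ∧ k ≤ #{t | x t = x t₀} ∧ IsInjSum w x k 0 := by
    by_cases hw : ∃ i₀, #{t | x t = x t₀} ≤ #{i | (w i : ZMod (AddMonoid.exponent G)) = w i₀}
    · obtain ⟨i₀, hi₀⟩ := hw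
      exact exists_isInjSum_zero_of_le_card_weight_class (fun t => hmax t (mem_univ t)) hi₀
        (by simp [hn])
    · push Not at hw
      exact exists_isInjSum_zero_of_card_weight_class_le le_rfl (fun i => (hw i).le)
        (by simpa [hn] using Nat.le_of_dvd hn₀ (hn ▸ AddGroup.exponent_dvd_card))
  exact ⟨I, f, hk₁, hkL.trans (hrep _), hf, hsum⟩
end

section
/- Let G be a finite abelian group of order n with Davenport constant D, and put m = n + D - 1. Every sequence x = (x_1, ..., x_m) of elements of G has a zero-sum subsequence of length exactly n. -/
/-!
Translate `x` so that its most frequent value becomes `0`, and let `h` be the multiplicity of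
that value. Among the nonzero terms, greedily removing nonempty zero-sum subsequences, which exist
among any `D` terms, yields a zero-sum subsequence of length at least `n - h`. While it is longer
than `n`, it contains a nonempty zero-sum subsequence of length at most `h`, which we delete;
padding with at most `h` zeros then gives length exactly `n`, and the translation is harmless
because `n • c = 0`.

The short zero-sum subsequence comes from the Kemperman–Scherk inequality
`#A + #B ≤ #(A + B) + 1`, valid when `0 ∈ A ∩ B` has only the trivial representation `0 + 0`.
Ranking each term among the earlier terms of the same value splits the sequence into `h` classes
of distinct values. Adjoining `0` to the value set of each class and adding these sets up,
Kemperman–Scherk would make the sumset larger than `G`, unless some nonempty set of classes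
admits a zero-sum choice of one term per class.
-/

/-- `D` is the Davenport constant of `G`: every sequence of `D` elements has a
nonempty zero-sum subsequence, and some sequence of `D - 1` elements has none. -/
def IsDavenport (G : Type*) [AddCommGroup G] [Fintype G] (D : ℕ) : Prop :=
  (∀ x : Fin D → G, ∃ I : Finset (Fin D), I.Nonempty ∧ ∑ i ∈ I, x i = 0) ∧
  (∃ x : Fin (D - 1) → G, ∀ I : Finset (Fin (D - 1)), I.Nonempty → ∑ i ∈ I, x i ≠ 0)

open Finset
open scoped Pointwise

section ZeroSum

variable {G ι : Type*} [AddCommGroup G]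

theorem IsDavenport.exists_zeroSum_subset [Fintype G] {D : ℕ} (hD : IsDavenport G D)
    (y : ι → G) {s : Finset ι} (hs : D ≤ #s) : ∃ P ⊆ s, P.Nonempty ∧ ∑ i ∈ P, y i = 0 := by
  let f : Fin D ↪ ι :=
    (Fin.castLEEmb hs).trans (s.equivFin.symm.toEmbedding.trans (Function.Embedding.subtype _))
  obtain ⟨I, hI, hI0⟩ := hD.1 (y ∘ f)
  refine ⟨I.map f, fun i hi ↦ ?_, hI.map, by rwa [sum_map]⟩
  obtain ⟨k, -, rfl⟩ := mem_map.1 hi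
  exact (s.equivFin.symm _).2

theorem exists_zeroSum_subset_card_lt [DecidableEq ι] {y : ι → G} {D : ℕ}
    (hdav : ∀ s : Finset ι, D ≤ #s → ∃ P ⊆ s, P.Nonempty ∧ ∑ i ∈ P, y i = 0) (R : Finset ι) :
    ∃ U ⊆ R, ∑ i ∈ U, y i = 0 ∧ #R < #U + D := by
  induction R using Finset.strongInduction with
  | H R ih =>
  by_cases hR : #R < D
  · exact ⟨∅, empty_subset R, sum_empty, by simpa using hR⟩
  obtain ⟨P, hPR, hP, hP0⟩ := hdav R (not_lt.1 hR)
  obtain ⟨U, hU, hU0, hUcard⟩ := ih (R \ P) (sdiff_ssubset hPR hP)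
  have hdisj : Disjoint U P := disjoint_of_subset_left hU sdiff_disjoint
  refine ⟨U ∪ P, union_subset (hU.trans sdiff_subset) hPR, ?_, ?_⟩
  · rw [sum_union hdisj, hU0, hP0, add_zero]
  · rw [card_union_of_disjoint hdisj]
    have := card_sdiff_of_subset hPR
    have := card_le_card hPR
    omega

variable [DecidableEq G]

theorem disjoint_erase_zero_of_add_mem {A B : Finset G}
    (huniq : ∀ a ∈ A, ∀ b ∈ B, a + b = 0 → a = 0)
    (hclosed : ∀ a ∈ A.erase 0, ∀ b ∈ B, a + b ∈ A) : Disjoint B (A.erase 0) := by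
  rw [disjoint_left]
  intro b hb hbA
  -- `· + b` maps `A.erase 0` injectively into itself, hence onto itself, so `b = a + b` for some
  -- nonzero `a`.
  have hmaps : (A.erase 0).image (· + b) ⊆ A.erase 0 := by
    simp only [subset_iff, mem_image, mem_erase]
    rintro _ ⟨a, ⟨ha0, ha⟩, rfl⟩
    exact ⟨fun h ↦ ha0 (huniq a ha b hb h), hclosed a (mem_erase.2 ⟨ha0, ha⟩) b hb⟩
  have hsurj := eq_of_subset_of_card_le hmaps (card_image_of_injective _ (add_left_injective b)).ge
  obtain ⟨a, ha, hab⟩ := mem_image.1 (hsurj ▸ hbA)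
  exact (mem_erase.1 ha).1 (by simpa using hab)

theorem kemperman_scherk {A B : Finset G} (hA : (0 : G) ∈ A) (hB : (0 : G) ∈ B)
    (huniq : ∀ a ∈ A, ∀ b ∈ B, a + b = 0 → a = 0) : #A + #B ≤ #(A + B) + 1 := by
  induction B using Finset.strongInduction generalizing A with
  | H B ih =>
  by_cases hclosed : ∀ a ∈ A.erase 0, ∀ b ∈ B, a + b ∈ A
  · have hsub : B ∪ A.erase 0 ⊆ A + B := union_subset
      (fun b hb ↦ mem_add.2 ⟨0, hA, b, hb, zero_add b⟩)
      (fun a ha ↦ mem_add.2 ⟨a, mem_of_mem_erase ha, 0, hB, add_zero a⟩)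
    have := card_le_card hsub
    rw [card_union_of_disjoint (disjoint_erase_zero_of_add_mem huniq hclosed),
      card_erase_of_mem hA] at this
    have := card_pos.2 ⟨0, hA⟩
    omega
  push Not at hclosed
  obtain ⟨a, ha, b, hb, hab⟩ := hclosed
  obtain ⟨ha0, ha⟩ := mem_erase.1 ha
  -- The Dyson transform by `a` keeps `#A + #B`, does not enlarge `A + B` and strictly shrinks `B`.
  set e := addDysonETransform a (A, B)
  have hmem : ∀ {c : G}, c ∈ -a +ᵥ A ↔ a + c ∈ A := mem_neg_vadd_finset_iff
  have hlt : e.2 ⊂ B := by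
    refine ssubset_of_subset_of_ne inter_subset_left fun h ↦ hab ?_
    have : b ∈ e.2 := h ▸ hb
    exact hmem.1 (mem_inter.1 this).2
  have he0 : (0 : G) ∈ e.2 := mem_inter.2 ⟨hB, hmem.2 (by simpa using ha)⟩
  have huniq' : ∀ u ∈ e.1, ∀ v ∈ e.2, u + v = 0 → u = 0 := by
    intro u hu v hv huv
    obtain ⟨hvB, hvA⟩ := mem_inter.1 hv
    rcases mem_union.1 hu with hu | hu
    · exact huniq u hu v hvB huv
    obtain ⟨w, hw, rfl⟩ := mem_vadd_finset.1 hu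
    have hav : a + v = 0 :=
      huniq (a + v) (hmem.1 hvA) w hw (by rw [← huv, vadd_eq_add]; abel)
    exact absurd (huniq a ha v hvB hav) ha0
  calc #A + #B = #e.1 + #e.2 := (addDysonETransform.card a (A, B)).symm
    _ ≤ #(e.1 + e.2) + 1 := ih e.2 hlt (mem_union_left _ hA) he0 huniq'
    _ ≤ #(A + B) + 1 := Nat.add_le_add_right (card_le_card (addDysonETransform.subset a (A, B))) 1

theorem Finset.mem_finsetSum {s : Finset ι} {A : ι → Finset G} {v : G} :
    v ∈ ∑ i ∈ s, A i ↔ ∃ g : ι → G, (∀ i ∈ s, g i ∈ A i) ∧ ∑ i ∈ s, g i = v := by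
  rw [← mem_coe, coe_sum, Set.mem_finsetSum]
  simp

theorem exists_subset_mem_sum_of_mem_sum_insert_zero {s : Finset ι} {A : ι → Finset G} {v : G}
    (hv : v ∈ ∑ i ∈ s, insert 0 (A i)) : ∃ J ⊆ s, v ∈ ∑ i ∈ J, A i := by
  obtain ⟨g, hg, rfl⟩ := mem_finsetSum.1 hv
  refine ⟨{i ∈ s | g i ≠ 0}, filter_subset _ _, ?_⟩
  refine mem_finsetSum.2 ⟨g, fun i hi ↦ ?_, sum_filter_ne_zero s⟩
  obtain ⟨his, hi0⟩ := mem_filter.1 hi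
  exact (mem_insert.1 (hg i his)).resolve_left hi0

section Selection

variable [DecidableEq ι]

theorem exists_zero_mem_sum_or_card_sum_insert_zero_ge {s : Finset ι} {A : ι → Finset G}
    (h0 : ∀ i ∈ s, (0 : G) ∉ A i) :
    (∃ J ⊆ s, J.Nonempty ∧ (0 : G) ∈ ∑ i ∈ J, A i) ∨
      ∑ i ∈ s, #(A i) + 1 ≤ #(∑ i ∈ s, insert 0 (A i)) := by
  induction s using Finset.induction_on with
  | empty => simp
  | insert i s hi ih =>
  rw [forall_mem_insert] at h0
  rcases ih h0.2 with ⟨J, hJs, hJ, hJ0⟩ | ih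
  · exact .inl ⟨J, hJs.trans (subset_insert i s), hJ, hJ0⟩
  by_cases hsel : ∃ a ∈ A i, ∃ v ∈ ∑ j ∈ s, insert 0 (A j), a + v = 0
  · obtain ⟨a, ha, v, hv, hav⟩ := hsel
    obtain ⟨J, hJs, hvJ⟩ := exists_subset_mem_sum_of_mem_sum_insert_zero hv
    refine .inl ⟨insert i J, insert_subset_insert i hJs, insert_nonempty i J, ?_⟩
    rw [sum_insert (fun h ↦ hi (hJs h)), ← hav]
    exact add_mem_add ha hvJ
  push Not at hsel
  refine .inr ?_
  have hks := kemperman_scherk (mem_insert_self 0 (A i))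
    (mem_finsetSum.2 ⟨0, fun j _ ↦ mem_insert_self 0 (A j), sum_const_zero⟩)
    fun a ha v hv hav ↦ (mem_insert.1 ha).resolve_right fun ha ↦ hsel a ha v hv hav
  rw [card_insert_of_notMem h0.1] at hks
  rw [sum_insert hi, sum_insert hi]
  omega

theorem exists_zero_mem_sum_of_card_le [Fintype G] {s : Finset ι} {A : ι → Finset G}
    (h0 : ∀ i ∈ s, (0 : G) ∉ A i) (hcard : Fintype.card G ≤ ∑ i ∈ s, #(A i)) :
    ∃ J ⊆ s, J.Nonempty ∧ (0 : G) ∈ ∑ i ∈ J, A i :=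
  (exists_zero_mem_sum_or_card_sum_insert_zero_ge h0).resolve_right fun h ↦ by
    have := card_le_univ (∑ i ∈ s, insert 0 (A i))
    omega

end Selection

section ValueRank

variable {α : Type*} [DecidableEq α] [LinearOrder ι] (y : ι → α) (U : Finset ι)

def valueRank (i : ι) : ℕ := #{j ∈ U | y j = y i ∧ j < i}

variable {y U}

theorem valueRank_lt {i : ι} {h : ℕ} (hi : i ∈ U) (hmult : #{j ∈ U | y j = y i} ≤ h) :
    valueRank y U i < h := by
  refine (card_lt_card ⟨fun j hj ↦ ?_, fun hsub ↦ ?_⟩).trans_le hmult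
  · exact mem_filter.2 ⟨(mem_filter.1 hj).1, (mem_filter.1 hj).2.1⟩
  · exact lt_irrefl i (mem_filter.1 (hsub (mem_filter.2 ⟨hi, rfl⟩))).2.2

theorem valueRank_lt_valueRank {a b : ι} (ha : a ∈ U) (hab : a < b) (hy : y a = y b) :
    valueRank y U a < valueRank y U b := by
  refine card_lt_card ⟨fun j hj ↦ ?_, fun hsub ↦ ?_⟩
  · obtain ⟨hjU, hjy, hja⟩ := mem_filter.1 hj
    exact mem_filter.2 ⟨hjU, hjy.trans hy, hja.trans hab⟩
  · exact lt_irrefl a (mem_filter.1 (hsub (mem_filter.2 ⟨ha, hy, hab⟩))).2.2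

theorem injOn_filter_valueRank_eq {k : ℕ} :
    Set.InjOn y ({i ∈ U | valueRank y U i = k} : Finset ι) := by
  intro a ha b hb hy
  rw [mem_coe, mem_filter] at ha hb
  by_contra hne
  rcases lt_or_gt_of_ne hne with hab | hab
  · exact (valueRank_lt_valueRank ha.1 hab hy).ne (ha.2.trans hb.2.symm)
  · exact (valueRank_lt_valueRank hb.1 hab hy.symm).ne (hb.2.trans ha.2.symm)

end ValueRank

theorem exists_zeroSum_subset_card_le [Fintype G] [LinearOrder ι] {y : ι → G} {U : Finset ι}
    {h : ℕ} (hU : Fintype.card G ≤ #U) (h0 : ∀ i ∈ U, y i ≠ 0)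
    (hmult : ∀ g, #{i ∈ U | y i = g} ≤ h) :
    ∃ P ⊆ U, P.Nonempty ∧ #P ≤ h ∧ ∑ i ∈ P, y i = 0 := by
  set C : ℕ → Finset ι := fun k ↦ {i ∈ U | valueRank y U i = k}
  have hcard : #U = ∑ k ∈ range h, #((C k).image y) := by
    rw [card_eq_sum_card_fiberwise fun i hi ↦ mem_range.2 (valueRank_lt hi (hmult (y i)))]
    exact sum_congr rfl fun k _ ↦ (card_image_of_injOn injOn_filter_valueRank_eq).symm
  have hC0 : ∀ k ∈ range h, (0 : G) ∉ (C k).image y := by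
    intro k _ hk
    obtain ⟨i, hi, hi0⟩ := mem_image.1 hk
    exact h0 i (mem_filter.1 hi).1 hi0
  obtain ⟨J, hJh, hJ, hJ0⟩ := exists_zero_mem_sum_of_card_le hC0 (hcard ▸ hU)
  obtain ⟨g, hg, hg0⟩ := mem_finsetSum.1 hJ0
  have hpre : ∀ k ∈ J, ∃ i ∈ C k, y i = g k := fun k hk ↦ mem_image.1 (hg k hk)
  have : Nonempty ι := let ⟨k, hk⟩ := hJ; ⟨(hpre k hk).choose⟩
  choose! f hfC hfg using hpre
  have hfU : ∀ k ∈ J, f k ∈ U := fun k hk ↦ (mem_filter.1 (hfC k hk)).1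
  have hfinj : Set.InjOn f J := fun a ha b hb hab ↦ by
    rw [← (mem_filter.1 (hfC a ha)).2, ← (mem_filter.1 (hfC b hb)).2, hab]
  refine ⟨J.image f, image_subset_iff.2 hfU, hJ.image f, ?_, ?_⟩
  · exact (card_image_le).trans ((card_le_card hJh).trans (card_range h).le)
  · rw [sum_image hfinj, ← hg0]
    exact sum_congr rfl hfg

theorem exists_zeroSum_subset_card_le_card [Fintype G] [LinearOrder ι] {y : ι → G}
    {U : Finset ι} {h : ℕ} (h0 : ∀ i ∈ U, y i ≠ 0) (hmult : ∀ g, #{i ∈ U | y i = g} ≤ h)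
    (hsum : ∑ i ∈ U, y i = 0) (hcard : Fintype.card G ≤ #U + h) :
    ∃ V ⊆ U, ∑ i ∈ V, y i = 0 ∧ Fintype.card G ≤ #V + h ∧ #V ≤ Fintype.card G := by
  obtain ⟨V, hV, hmin⟩ := exists_min_image
    {V ∈ U.powerset | ∑ i ∈ V, y i = 0 ∧ Fintype.card G ≤ #V + h} card
    ⟨U, mem_filter.2 ⟨mem_powerset_self U, hsum, hcard⟩⟩
  obtain ⟨hVU, hV0, hVcard⟩ := by simpa only [mem_filter, mem_powerset] using hV
  refine ⟨V, hVU, hV0, hVcard, not_lt.1 fun hlarge ↦ ?_⟩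
  obtain ⟨P, hPV, hP, hPh, hP0⟩ := exists_zeroSum_subset_card_le hlarge.le
    (fun i hi ↦ h0 i (hVU hi)) fun g ↦ (card_le_card (filter_subset_filter _ hVU)).trans (hmult g)
  have hsdiff : #(V \ P) = #V - #P := card_sdiff_of_subset hPV
  have := hmin (V \ P) <| mem_filter.2 ⟨mem_powerset.2 (sdiff_subset.trans hVU),
    by rw [sum_sdiff_eq_sub hPV, hV0, hP0, sub_zero], by omega⟩
  have := card_pos.2 hP
  omega

theorem exists_zeroSum_card_eq_card [Fintype G] [Fintype ι] [LinearOrder ι] {y : ι → G} {D : ℕ}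
    (hdav : ∀ s : Finset ι, D ≤ #s → ∃ P ⊆ s, P.Nonempty ∧ ∑ i ∈ P, y i = 0)
    (hmult : ∀ g, #{i | y i = g} ≤ #{i | y i = 0})
    (hcard : Fintype.card G + D ≤ Fintype.card ι + 1) :
    ∃ I : Finset ι, #I = Fintype.card G ∧ ∑ i ∈ I, y i = 0 := by
  set Z : Finset ι := {i | y i = 0}
  set T : Finset ι := {i | y i ≠ 0}
  have hZT : #Z + #T = Fintype.card ι := card_filter_add_card_filter_not _
  obtain ⟨U, hUT, hU0, hUcard⟩ := exists_zeroSum_subset_card_lt hdav T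
  obtain ⟨V, hVU, hV0, hVlow, hVhigh⟩ := exists_zeroSum_subset_card_le_card (h := #Z)
    (fun i hi ↦ (mem_filter.1 (hUT hi)).2)
    (fun g ↦ (card_le_card (filter_subset_filter _ (subset_univ U))).trans (hmult g)) hU0
    (by omega)
  obtain ⟨W, hWZ, hW⟩ := exists_subset_card_eq (s := Z) (n := Fintype.card G - #V) (by omega)
  have hdisj : Disjoint V W :=
    (disjoint_filter_filter_not univ univ _).symm.mono (hVU.trans hUT) hWZ
  refine ⟨V ∪ W, by rw [card_union_of_disjoint hdisj]; omega, ?_⟩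
  rw [sum_union hdisj, hV0, sum_eq_zero fun i hi ↦ (mem_filter.1 (hWZ hi)).2, add_zero]

end ZeroSum

theorem stmt_5 {G : Type*} [AddCommGroup G] [Fintype G] (n D : ℕ)
    (hn : Fintype.card G = n) (hD : IsDavenport G D)
    (x : Fin (n + D - 1) → G) :
    ∃ I : Finset (Fin (n + D - 1)), I.card = n ∧ ∑ i ∈ I, x i = 0 := by
  classical
  have hn1 : 1 ≤ n := hn ▸ Fintype.card_pos
  obtain ⟨c, -, hc⟩ := exists_max_image univ (fun g ↦ #{i | x i = g}) univ_nonempty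
  have hmult : ∀ g, #{i | x i - c = g} ≤ #{i | x i - c = 0} := by
    simpa only [sub_eq_iff_eq_add, zero_add] using fun g ↦ hc (g + c) (mem_univ _)
  obtain ⟨I, hI, hI0⟩ := exists_zeroSum_card_eq_card
    (fun s hs ↦ hD.exists_zeroSum_subset (fun i ↦ x i - c) hs) hmult
    (by rw [Fintype.card_fin]; omega)
  refine ⟨I, hI.trans hn, ?_⟩
  rw [sum_sub_distrib, sub_eq_zero] at hI0
  rw [hI0, sum_const, hI, card_nsmul_eq_zero]
end

section
/- Let G be a finite abelian group of order n. Every sequence of 2n - 1 elements of G has a zero-sum subsequence of length exactly n. -/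
/-!
Induct on `|G|`. For `g ≠ 0` of order `m`, with `H = ⟨g⟩` of index `k = |G| / m`, the induction
hypothesis for `G ⧸ H` lets us peel off, one after another, `2m - 1` disjoint blocks of `k` terms
each with sum in `H`, say `cⱼ • g`. The Erdős–Ginzburg–Ziv theorem for `ℤ` then picks `m` blocks
with `m ∣ ∑ cⱼ`; their union has `k m = |G|` terms and sum `(∑ cⱼ) • g = 0`.
-/

open Finset Function

section

variable {ι : Type*} [DecidableEq ι]

theorem Finset.exists_pairwiseDisjoint_card_eq_of_forall_exists {p : Finset ι → Prop} {k : ℕ}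
    (hp : ∀ s : Finset ι, 2 * k - 1 ≤ #s → ∃ t ⊆ s, #t = k ∧ p t)
    (r : ℕ) (s : Finset ι) (hs : r * k + (k - 1) ≤ #s) :
    ∃ T : Fin r → Finset ι, (∀ j, T j ⊆ s ∧ #(T j) = k ∧ p (T j)) ∧
      Pairwise (Disjoint on T) := by
  induction r generalizing s with
  | zero => exact ⟨Fin.elim0, fun j => j.elim0, fun j => j.elim0⟩
  | succ r ih =>
    rw [add_one_mul] at hs
    obtain ⟨t, hts, htk, hpt⟩ := hp s (by omega)
    obtain ⟨T, hT, hTdisj⟩ := ih (s \ t) (by rw [card_sdiff_of_subset hts, htk]; omega)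
    have ht_disj : ∀ j, Disjoint t (T j) := fun j => disjoint_sdiff.mono_right (hT j).1
    refine ⟨Fin.cons t T,
      Fin.cons ⟨hts, htk, hpt⟩ fun j => ⟨(hT j).1.trans sdiff_subset, (hT j).2⟩, ?_⟩
    intro j j' hne
    cases j using Fin.cases <;> cases j' using Fin.cases
    · exact absurd rfl hne
    · exact ht_disj _
    · exact (ht_disj _).symm
    · exact hTdisj (fun h => hne (congrArg _ h))

theorem exists_sum_eq_zero_of_forall_exists_sum_mem_zmultiples {G : Type*} [AddCommGroup G]
    (g : G) {k : ℕ} (a : ι → G)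
    (hblock : ∀ s : Finset ι, 2 * k - 1 ≤ #s →
      ∃ t ⊆ s, #t = k ∧ ∑ i ∈ t, a i ∈ AddSubgroup.zmultiples g)
    (s : Finset ι) (hs : 2 * (k * addOrderOf g) - 1 ≤ #s) :
    ∃ t ⊆ s, #t = k * addOrderOf g ∧ ∑ i ∈ t, a i = 0 := by
  set m := addOrderOf g
  obtain hm | hm := m.eq_zero_or_pos
  · exact ⟨∅, empty_subset s, by simp [hm], sum_empty⟩
  obtain ⟨T, hT, hTdisj⟩ :=
    exists_pairwiseDisjoint_card_eq_of_forall_exists hblock (2 * m - 1) s (by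
      obtain rfl | hk := k.eq_zero_or_pos
      · simp
      have : k ≤ k * m := Nat.le_mul_of_pos_right k hm
      rw [Nat.sub_mul, one_mul, mul_assoc, mul_comm m]
      omega)
  choose c hc using fun j => AddSubgroup.mem_zmultiples_iff.mp (hT j).2.2
  obtain ⟨J, -, hJcard, hJdvd⟩ := Int.erdos_ginzburg_ziv (n := m) (s := univ) c (by simp)
  have hdisj : (J : Set (Fin (2 * m - 1))).PairwiseDisjoint T := fun j _ j' _ h => hTdisj h
  refine ⟨J.biUnion T, biUnion_subset.mpr fun j _ => (hT j).1, ?_, ?_⟩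
  · rw [card_biUnion hdisj, sum_const_nat fun j _ => (hT j).2.1, hJcard, mul_comm]
  · obtain ⟨d, hd⟩ := hJdvd
    calc ∑ i ∈ J.biUnion T, a i = (∑ j ∈ J, c j) • g := by
          rw [sum_biUnion hdisj, sum_smul]; exact sum_congr rfl fun j _ => (hc j).symm
      _ = 0 := by
          rw [hd, mul_comm, mul_zsmul, natCast_zsmul, addOrderOf_nsmul_eq_zero, smul_zero]

theorem AddCommGroup.exists_subset_card_eq_sum_eq_zero {G : Type*} [AddCommGroup G] [Finite G]
    (s : Finset ι) (a : ι → G) (hs : 2 * Nat.card G - 1 ≤ #s) :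
    ∃ t ⊆ s, #t = Nat.card G ∧ ∑ i ∈ t, a i = 0 := by
  induction hG : Nat.card G using Nat.strong_induction_on generalizing G s with
  | _ n ih =>
  subst hG
  rcases subsingleton_or_nontrivial G with hG | hG
  · rw [Nat.card_of_subsingleton (0 : G)] at hs ⊢
    obtain ⟨t, hts, ht⟩ := exists_subset_card_eq hs
    exact ⟨t, hts, ht, Subsingleton.elim _ _⟩
  obtain ⟨g, hg⟩ := exists_ne (0 : G)
  have hcard : Nat.card G = Nat.card (G ⧸ AddSubgroup.zmultiples g) * addOrderOf g := by
    rw [AddSubgroup.card_eq_card_quotient_mul_card_addSubgroup, Nat.card_zmultiples]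
  have hlt : Nat.card (G ⧸ AddSubgroup.zmultiples g) < Nat.card G := by
    rw [hcard]
    refine lt_mul_of_one_lt_right Nat.card_pos ?_
    exact lt_of_le_of_ne (addOrderOf_pos g) fun h => hg (AddMonoid.addOrderOf_eq_one_iff.mp h.symm)
  rw [hcard] at hs ⊢
  refine exists_sum_eq_zero_of_forall_exists_sum_mem_zmultiples g a (fun s' hs' => ?_) s hs
  obtain ⟨t, hts, htk, ht⟩ := ih _ hlt s' (fun i => (a i : G ⧸ AddSubgroup.zmultiples g)) hs' rfl
  exact ⟨t, hts, htk, by simpa [← QuotientAddGroup.eq_zero_iff] using ht⟩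

end

theorem stmt_6 {G : Type*} [AddCommGroup G] [Fintype G] (n : ℕ)
    (hn : Fintype.card G = n) (x : Fin (2 * n - 1) → G) :
    ∃ I : Finset (Fin (2 * n - 1)), I.card = n ∧ ∑ i ∈ I, x i = 0 := by
  subst hn
  obtain ⟨I, -, hI⟩ := AddCommGroup.exists_subset_card_eq_sum_eq_zero (G := G) univ x
    (by simp [Nat.card_eq_fintype_card])
  exact ⟨I, by simpa [Nat.card_eq_fintype_card] using hI⟩
end

section
/- Let G be a finite abelian group with Davenport constant D, let x = (x_1, ..., x_m) ∈ G^m and w = (w_1, ..., w_m) ∈ ℤ^m. For any two subsets A, B ⊆ [1, m] with |B| ≥ |A|, there exist a subset R ⊆ A with |R| ≥ |A| - D + 1 and an injection g: R → B such that (R, g) is D-shellable; in particular ∑_{i ∈ R} w_i · x_{g(i)} = 0. -/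
/-- `(I, f)` is `k`-shellable: `f` is injective on `I` and `I` admits a partition into
(nonempty) blocks of size at most `k`, each with `∑ i ∈ B, w i • x (f i) = 0`. -/
def Shellable {G : Type*} [AddCommGroup G] {m : ℕ} (w : Fin m → ℤ) (x : Fin m → G)
    (k : ℕ) (I : Finset (Fin m)) (f : Fin m → Fin m) : Prop :=
  Set.InjOn f I ∧ ∃ P : Finpartition I, ∀ B ∈ P.parts, B.card ≤ k ∧ ∑ i ∈ B, w i • x (f i) = 0

/-!
Repeatedly remove from `A` a nonempty zero-sum block of at most `D` terms, which exists as long as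
at least `D` indices remain; the process stops with fewer than `D` indices left over. The weights
are evaluated along any injection `A → B`, which exists since `|A| ≤ |B|`.
-/

open Finset

theorem Finpartition.sum_sum_parts {α M : Type*} [DecidableEq α] [AddCommMonoid M]
    {s : Finset α} (P : Finpartition s) (f : α → M) :
    ∑ t ∈ P.parts, ∑ i ∈ t, f i = ∑ i ∈ s, f i := by
  conv_rhs => rw [← P.biUnion_parts, sum_biUnion P.disjoint]
  rfl

section ZeroSum

variable {ι G : Type*} [AddCommGroup G] {D : ℕ}

theorem exists_zeroSum_subset_of_le_card
    (hD : ∀ y : Fin D → G, ∃ I : Finset (Fin D), I.Nonempty ∧ ∑ i ∈ I, y i = 0)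
    (v : ι → G) {T : Finset ι} (hT : D ≤ #T) :
    ∃ S ⊆ T, S.Nonempty ∧ #S ≤ D ∧ ∑ i ∈ S, v i = 0 := by
  obtain ⟨T', hT'T, hT'⟩ := exists_subset_card_eq hT
  let e : Fin D ↪ ι :=
    (T'.equivFinOfCardEq hT').symm.toEmbedding.trans (Function.Embedding.subtype _)
  obtain ⟨I, hI, hIsum⟩ := hD (v ∘ e)
  refine ⟨I.map e, fun i hi => ?_, hI.map, ?_, by simpa using hIsum⟩
  · obtain ⟨j, -, rfl⟩ := mem_map.1 hi
    exact hT'T (Subtype.prop _)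
  · simpa using card_le_univ I

theorem exists_finpartition_zeroSum [DecidableEq ι]
    (hD : ∀ y : Fin D → G, ∃ I : Finset (Fin D), I.Nonempty ∧ ∑ i ∈ I, y i = 0)
    (v : ι → G) (A : Finset ι) :
    ∃ R ⊆ A, #A < #R + D ∧
      ∃ P : Finpartition R, ∀ S ∈ P.parts, #S ≤ D ∧ ∑ i ∈ S, v i = 0 := by
  induction A using strongInduction with
  | H A ih =>
  by_cases hA : #A < D
  · exact ⟨∅, empty_subset _, by omega, Finpartition.empty _, by simp⟩
  obtain ⟨S, hSA, hS, hSD, hSsum⟩ := exists_zeroSum_subset_of_le_card hD v (not_lt.1 hA)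
  obtain ⟨R, hR, hRcard, P, hP⟩ := ih (A \ S) (sdiff_ssubset hSA hS)
  have hRS : Disjoint R S := disjoint_of_subset_left hR sdiff_disjoint
  refine ⟨R ∪ S, union_subset (hR.trans sdiff_subset) hSA, ?_,
    P.extend hS.ne_empty hRS rfl, ?_⟩
  · rw [card_union_of_disjoint hRS]
    have := card_sdiff_add_card_eq_card hSA
    omega
  · intro T hT
    rw [Finpartition.extend_parts, mem_insert] at hT
    rcases hT with rfl | hT
    exacts [⟨hSD, hSsum⟩, hP T hT]

end ZeroSum

theorem stmt_7 {G : Type*} [AddCommGroup G] [Fintype G] (D m : ℕ)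
    (hD : IsDavenport G D) (x : Fin m → G) (w : Fin m → ℤ)
    (A B : Finset (Fin m)) (hAB : A.card ≤ B.card) :
    ∃ (R : Finset (Fin m)) (g : Fin m → Fin m),
      R ⊆ A ∧ A.card + 1 ≤ R.card + D ∧ (∀ i ∈ R, g i ∈ B) ∧
      Shellable w x D R g ∧ ∑ i ∈ R, w i • x (g i) = 0 := by
  obtain ⟨g, hgB, hginj⟩ :
      ∃ g : Fin m → Fin m, (A : Set (Fin m)) ⊆ g ⁻¹' B ∧ Set.InjOn g A := by
    rcases A.eq_empty_or_nonempty with rfl | ⟨a, -⟩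
    · exact ⟨id, by simp, by simp⟩
    · have : Nonempty (Fin m) := ⟨a⟩
      exact A.finite_toSet.exists_injOn_of_encard_le (by simpa)
  obtain ⟨R, hRA, hRcard, P, hP⟩ :=
    exists_finpartition_zeroSum hD.1 (fun i => w i • x (g i)) A
  refine ⟨R, g, hRA, hRcard, fun i hi => hgB (hRA hi),
    ⟨hginj.mono (coe_subset.2 hRA), P, hP⟩, ?_⟩
  rw [← P.sum_sum_parts]
  exact sum_eq_zero fun S hS => (hP S hS).2
end

section
/- Let G = Z/nZ be a cyclic group of order n. Every sequence x = (x_1, ..., x_n) of n elements of G in which no element occurs more than k times has a nonempty zero-sum subsequence of length at most k. -/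
open Finset Pointwise

lemma scherk {n : ℕ} [NeZero n] :
    ∀ (B A : Finset (ZMod n)), (0:ZMod n) ∈ A → (0:ZMod n) ∈ B →
    (∀ a ∈ A, ∀ b ∈ B, a + b = 0 → a = 0) →
    A.card + B.card ≤ (A + B).card + 1 := by
  intro B
  induction B using Finset.strongInduction with
  | _ B ih =>
    intro A hA hB h
    by_cases hstuck : ∃ e ∈ A, e ≠ 0 ∧ ∃ b ∈ B, b + e ∉ A
    · obtain ⟨e, heA, hne, b0, hb0, hb0n⟩ := hstuck
      set A' := A ∪ B.image (· + e) with hA'def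
      set B' := B ∩ A.image (· - e) with hB'def
      have hB'B : B' ⊆ B := inter_subset_left
      have hb0' : b0 ∉ B' := by
        simp only [hB'def, mem_inter, mem_image, not_and]
        rintro - ⟨a, ha, hae⟩
        exact hb0n (by rw [← hae, sub_add_cancel]; exact ha)
      have hssub : B' ⊂ B := ssubset_iff_of_subset hB'B |>.2 ⟨b0, hb0, hb0'⟩
      -- card identity
      have himg : B.image (· + e) \ A = (B \ A.image (· - e)).image (· + e) := by
        ext y
        simp only [mem_sdiff, mem_image]
        constructor
        · rintro ⟨⟨b, hb, rfl⟩, hyA⟩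
          refine ⟨b, ⟨hb, ?_⟩, rfl⟩
          rintro ⟨a, ha, hae⟩
          exact hyA (by rw [← hae, sub_add_cancel]; exact ha)
        · rintro ⟨b, ⟨hb, hbn⟩, rfl⟩
          refine ⟨⟨b, hb, rfl⟩, fun hyA => hbn ⟨b + e, hyA, by rw [add_sub_cancel_right]⟩⟩
      have hcard : A'.card + B'.card = A.card + B.card := by
        have h1 : A'.card = A.card + (B.image (· + e) \ A).card := by
          rw [hA'def, ← card_union_of_disjoint (disjoint_sdiff), union_sdiff_self_eq_union]
        have h2 : B'.card = B.card - (B \ A.image (· - e)).card := by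
          rw [hB'def, ← card_sdiff_add_card_inter B (A.image (· - e))]
          omega
        have h3 : (B \ A.image (· - e)).card ≤ B.card := card_le_card (sdiff_subset)
        have h4 : (B.image (· + e) \ A).card = (B \ A.image (· - e)).card := by
          rw [himg, card_image_of_injective _ (add_left_injective e)]
        omega
      have hsub : A' + B' ⊆ A + B := by
        intro z hz
        rw [Finset.mem_add] at hz ⊢
        obtain ⟨a', ha', b', hb', rfl⟩ := hz
        have hb'2 := hb'
        rw [hB'def, mem_inter, mem_image] at hb'2
        obtain ⟨hb'B, a2, ha2, ha2e⟩ := hb'2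
        rw [hA'def, mem_union, mem_image] at ha'
        rcases ha' with haA | ⟨b1, hb1, rfl⟩
        · exact ⟨a', haA, b', hb'B, rfl⟩
        · exact ⟨a2, ha2, b1, hb1, by rw [← ha2e]; ring⟩
      have h0B' : (0:ZMod n) ∈ B' := by
        rw [hB'def, mem_inter, mem_image]
        exact ⟨hB, e, heA, by rw [sub_self]⟩
      have h0A' : (0:ZMod n) ∈ A' := mem_union_left _ hA
      have h' : ∀ a ∈ A', ∀ b ∈ B', a + b = 0 → a = 0 := by
        intro a' ha' b' hb' hab
        have hb'2 := hb'
        rw [hB'def, mem_inter, mem_image] at hb'2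
        obtain ⟨hb'B, a2, ha2, ha2e⟩ := hb'2
        rw [hA'def, mem_union, mem_image] at ha'
        rcases ha' with haA | ⟨b1, hb1, rfl⟩
        · exact h a' haA b' hb'B hab
        · exfalso
          have ha2z : a2 = 0 := by
            apply h a2 ha2 b1 hb1
            rw [← ha2e] at hab; linear_combination hab
          have hb'e : b' = -e := by rw [← ha2e, ha2z, zero_sub]
          have : e = 0 := h e heA b' hb'B (by rw [hb'e, add_neg_cancel])
          exact hne this
      have := ih B' hssub A' h0A' h0B' h'
      calc A.card + B.card = A'.card + B'.card := hcard.symm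
        _ ≤ (A' + B').card + 1 := this
        _ ≤ (A + B).card + 1 := Nat.add_le_add_right (card_le_card hsub) 1
    · push_neg at hstuck
      -- hstuck : ∀ e ∈ A, e ≠ 0 → ∀ b ∈ B, b + e ∈ A
      have key : ∀ (m : ℕ), ∀ a ∈ A, a ≠ 0 → ∀ b ∈ B, b ≠ 0 →
          a + m • b ∈ A ∧ a + m • b ≠ 0 := by
        intro m
        induction m with
        | zero => intro a ha hane b hb hbne; simpa using ⟨ha, hane⟩
        | succ m ihm =>
          intro a ha hane b hb hbne
          obtain ⟨hc, hcne⟩ := ihm a ha hane b hb hbne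
          have hmem : b + (a + m • b) ∈ A := hstuck _ hc hcne b hb
          have heq : a + (m+1) • b = (a + m • b) + b := by
            rw [succ_nsmul]; ring
          constructor
          · rw [heq, add_comm _ b]; exact hmem
          · rw [heq]
            intro hz
            exact hcne (h _ hc b hb hz)
      have hdisj : Disjoint (A \ {0}) B := by
        rw [disjoint_left]
        intro c hc hcB
        rw [mem_sdiff, mem_singleton] at hc
        obtain ⟨hcA, hcne⟩ := hc
        obtain ⟨hy, hyne⟩ := key (2*n - 2) c hcA hcne c hcB hcne
        apply hyne
        apply h _ hy c hcB
        have hn1 : 1 ≤ n := Nat.one_le_iff_ne_zero.2 (NeZero.ne n)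
        have h22 : (2*n - 2) + 2 = 2*n := by omega
        have : (c + (2*n-2) • c) + c = (2*n) • c := by
          rw [← h22, add_nsmul, two_nsmul]
          abel
        rw [this, nsmul_eq_mul]
        push_cast
        simp [ZMod.natCast_self]
      have hunion : A + B = (A \ {0}) ∪ B := by
        ext z
        rw [Finset.mem_add, mem_union, mem_sdiff, mem_singleton]
        constructor
        · rintro ⟨a, ha, b, hb, rfl⟩
          by_cases hae : a = 0
          · right; simpa [hae] using hb
          · by_cases hbe : b = 0
            · left; simpa [hbe] using ⟨ha, hae⟩
            · left
              have := key 1 a ha hae b hb hbe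
              simpa using this
        · rintro (⟨hz, hzne⟩ | hz)
          · exact ⟨z, hz, 0, hB, add_zero z⟩
          · exact ⟨0, hA, z, hz, zero_add z⟩
      have hApos : 1 ≤ A.card := card_pos.2 ⟨0, hA⟩
      have : (A + B).card = (A.card - 1) + B.card := by
        rw [hunion, card_union_of_disjoint hdisj, card_sdiff_of_subset (by simpa using hA)]
        simp
      omega


theorem stmt_11 (n k : ℕ) (hn : 0 < n) (x : Fin n → ZMod n)
    (hrep : ∀ a : ZMod n, (Finset.univ.filter (fun i => x i = a)).card ≤ k) :
    ∃ I : Finset (Fin n), I.Nonempty ∧ I.card ≤ k ∧ ∑ i ∈ I, x i = 0 := by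
  classical
  haveI : NeZero n := ⟨hn.ne'⟩
  have i0 : Fin n := ⟨0, hn⟩
  have hk1 : 1 ≤ k := by
    refine le_trans ?_ (hrep (x i0))
    rw [Nat.one_le_iff_ne_zero, ← Nat.pos_iff_ne_zero, card_pos]
    exact ⟨i0, by simp⟩
  by_contra hcon
  push_neg at hcon
  have hzero : ∀ i, x i ≠ 0 := by
    intro i hi
    exact hcon {i} ⟨i, mem_singleton_self i⟩ (by simpa using hk1) (by simp [hi])
  -- rank of each index within its fiber
  set rank : Fin n → ℕ := fun i => (univ.filter (fun j => x j = x i ∧ j < i)).card with hrank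
  have hrank_lt : ∀ i, rank i < k := by
    intro i
    refine lt_of_lt_of_le (card_lt_card ?_) (hrep (x i))
    constructor
    · intro j hj
      simp only [mem_filter] at hj ⊢
      exact ⟨hj.1, hj.2.1⟩
    · intro hsub
      have := hsub (by simp : i ∈ univ.filter (fun j => x j = x i))
      simp at this
  have hrank_inj : ∀ i j, rank i = rank j → x i = x j → i = j := by
    intro i j hr hx
    by_contra hne
    rcases lt_or_gt_of_ne hne with hlt | hlt
    · have hss : (univ.filter (fun l => x l = x i ∧ l < i)) ⊂
          (univ.filter (fun l => x l = x j ∧ l < j)) := by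
        constructor
        · intro l hl
          simp only [mem_filter] at hl ⊢
          exact ⟨hl.1, hl.2.1.trans hx, hl.2.2.trans hlt⟩
        · intro hsub
          have := hsub (by simp [hx, hlt] : i ∈ univ.filter (fun l => x l = x j ∧ l < j))
          simp at this
      have := card_lt_card hss
      have hr' : (univ.filter (fun l => x l = x i ∧ l < i)).card =
          (univ.filter (fun l => x l = x j ∧ l < j)).card := hr
      omega
    · have hss : (univ.filter (fun l => x l = x j ∧ l < j)) ⊂
          (univ.filter (fun l => x l = x i ∧ l < i)) := by
        constructor
        · intro l hl
          simp only [mem_filter] at hl ⊢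
          exact ⟨hl.1, hl.2.1.trans hx.symm, hl.2.2.trans hlt⟩
        · intro hsub
          have := hsub (by simp [hx, hlt] : j ∈ univ.filter (fun l => x l = x i ∧ l < i))
          simp at this
      have := card_lt_card hss
      have hr' : (univ.filter (fun l => x l = x i ∧ l < i)).card =
          (univ.filter (fun l => x l = x j ∧ l < j)).card := hr
      omega
  set Cls : ℕ → Finset (Fin n) := fun r => univ.filter (fun i => rank i = r) with hCls
  set C : ℕ → Finset (ZMod n) := fun r => insert 0 ((Cls r).image x) with hC
  have hC0 : ∀ r, (0 : ZMod n) ∈ C r := fun r => mem_insert_self _ _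
  have hCcard : ∀ r, (C r).card = (Cls r).card + 1 := by
    intro r
    rw [hC]
    have h0 : (0 : ZMod n) ∉ (Cls r).image x := by
      simp only [mem_image, not_exists]
      rintro i ⟨-, hi⟩
      exact hzero i hi
    rw [card_insert_of_notMem h0, card_image_of_injOn]
    intro i hi j hj hx
    simp only [hCls, mem_coe, mem_filter] at hi hj
    exact hrank_inj i j (hi.2.trans hj.2.symm) hx
  set S : ℕ → Finset (ZMod n) := fun r => ∑ j ∈ range r, C j with hS
  have hSsucc : ∀ r, S (r+1) = S r + C r := by
    intro r; rw [hS]; exact sum_range_succ _ _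
  have hS0 : S 0 = {0} := by rw [hS]; simp; rfl
  have hS0mem : ∀ r, (0 : ZMod n) ∈ S r := by
    intro r
    induction r with
    | zero => rw [hS0]; exact mem_singleton_self _
    | succ r ihr =>
      rw [hSsucc]
      rw [Finset.mem_add]
      exact ⟨0, ihr, 0, hC0 r, add_zero 0⟩
  -- realizability
  have real : ∀ r, ∀ s ∈ S r, ∃ I : Finset (Fin n),
      (∀ i ∈ I, rank i < r) ∧ Set.InjOn rank ↑I ∧ ∑ i ∈ I, x i = s := by
    intro r
    induction r with
    | zero =>
      intro s hs
      rw [hS0, mem_singleton] at hs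
      exact ⟨∅, by simp, by simp [Set.InjOn], by simp [hs]⟩
    | succ r ihr =>
      intro s hs
      rw [hSsucc, Finset.mem_add] at hs
      obtain ⟨s', hs', c, hc, rfl⟩ := hs
      obtain ⟨I, hIr, hIinj, hIsum⟩ := ihr s' hs'
      rw [hC, mem_insert] at hc
      rcases hc with rfl | hc
      · exact ⟨I, fun i hi => (hIr i hi).trans (Nat.lt_succ_self r),
          hIinj, by rw [hIsum, add_zero]⟩
      · rw [mem_image] at hc
        obtain ⟨i0', hi0', rfl⟩ := hc
        simp only [hCls, mem_filter] at hi0'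
        have hi0I : i0' ∉ I := fun hmem => absurd (hIr i0' hmem) (by rw [hi0'.2]; omega)
        refine ⟨insert i0' I, ?_, ?_, ?_⟩
        · intro i hi
          rcases mem_insert.1 hi with rfl | hi
          · rw [hi0'.2]; exact Nat.lt_succ_self r
          · exact (hIr i hi).trans (Nat.lt_succ_self r)
        · intro a ha b hb hab
          simp only [coe_insert, Set.mem_insert_iff, mem_coe] at ha hb
          rcases ha with rfl | ha <;> rcases hb with rfl | hb
          · rfl
          · exact absurd (hab ▸ hIr b hb) (by rw [hi0'.2]; omega)
          · exact absurd ((hab.symm) ▸ hIr a ha) (by rw [hi0'.2]; omega)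
          · exact hIinj ha hb hab
        · rw [sum_insert hi0I, hIsum, add_comm]
  -- cardinal growth via Scherk
  have grow : ∀ r, r ≤ k → 1 + ∑ j ∈ range r, (Cls j).card ≤ (S r).card := by
    intro r
    induction r with
    | zero => intro _; rw [hS0]; simp
    | succ r ihr =>
      intro hrk
      have hr : r ≤ k := Nat.le_of_succ_le hrk
      have huniq : ∀ a ∈ S r, ∀ b ∈ C r, a + b = 0 → a = 0 := by
        intro s hs c hc hsc
        obtain ⟨I, hIr, hIinj, hIsum⟩ := real r s hs
        rw [hC, mem_insert] at hc
        rcases hc with rfl | hc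
        · rw [add_zero] at hsc; exact hsc
        · exfalso
          rw [mem_image] at hc
          obtain ⟨i0', hi0', rfl⟩ := hc
          simp only [hCls, mem_filter] at hi0'
          have hi0I : i0' ∉ I := fun hmem => absurd (hIr i0' hmem) (by rw [hi0'.2]; omega)
          set I' := insert i0' I with hI'
          have hsumI' : ∑ i ∈ I', x i = 0 := by
            rw [hI', sum_insert hi0I, hIsum, add_comm]; exact hsc
          have hinj' : Set.InjOn rank ↑I' := by
            intro a ha b hb hab
            simp only [hI', coe_insert, Set.mem_insert_iff, mem_coe] at ha hb
            rcases ha with rfl | ha <;> rcases hb with rfl | hb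
            · rfl
            · exact absurd (hab ▸ hIr b hb) (by rw [hi0'.2]; omega)
            · exact absurd ((hab.symm) ▸ hIr a ha) (by rw [hi0'.2]; omega)
            · exact hIinj ha hb hab
          have hcard : I'.card ≤ k := by
            have h1 : I'.card = (I'.image rank).card := (card_image_of_injOn hinj').symm
            have h2 : I'.image rank ⊆ range k := by
              intro v hv
              rw [mem_image] at hv
              obtain ⟨i, hi, rfl⟩ := hv
              exact mem_range.2 (hrank_lt i)
            rw [h1]
            exact le_trans (card_le_card h2) (by simp)
          exact hcon I' ⟨i0', mem_insert_self _ _⟩ hcard hsumI'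
      have hscherk := scherk (C r) (S r) (hS0mem r) (hC0 r) huniq
      rw [← hSsucc] at hscherk
      rw [sum_range_succ]
      have := ihr hr
      have hc := hCcard r
      omega
  have htotal : ∑ j ∈ range k, (Cls j).card = n := by
    have := Finset.card_eq_sum_card_fiberwise
      (f := rank) (s := (univ : Finset (Fin n))) (t := range k)
      (fun i _ => mem_range.2 (hrank_lt i))
    simp only [card_univ, Fintype.card_fin] at this
    rw [hCls]
    exact this.symm
  have hfin := grow k (le_refl k)
  rw [htotal] at hfin
  have hle : (S k).card ≤ n := by
    refine le_trans (card_le_univ _) ?_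
    simp [ZMod.card]
  omega
end

section
/- Let G be a finite abelian group of order n with Davenport constant D, and suppose ℓ ≥ D. Let m = n - 1, let x = (x_1, ..., x_m) ∈ G^m, and let w = (w_1, ..., w_m) ∈ ℤ^m. Then there exist a subset I ⊆ [1, m] with n - D ≤ |I| ≤ n - 1 and an injection f: I → [1, m] such that ∑_{i ∈ I} w_i · x_{f(i)} = 0. -/
theorem stmt_12 {G : Type*} [AddCommGroup G] [Fintype G] (n D ℓ : ℕ)
    (hn : Fintype.card G = n) (hD : IsDavenport G D) (hℓ : D ≤ ℓ)
    (x : Fin (n - 1) → G) (w : Fin (n - 1) → ℤ) :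
    ∃ (I : Finset (Fin (n - 1))) (f : Fin (n - 1) → Fin (n - 1)),
      n - D ≤ I.card ∧ I.card ≤ n - 1 ∧ Set.InjOn f I ∧
      ∑ i ∈ I, w i • x (f i) = 0 := by
  obtain ⟨hD1, hD2⟩ := hD
  have hDpos : 1 ≤ D := by
    by_contra h
    push_neg at h
    interval_cases D
    obtain ⟨I, hI, -⟩ := hD1 (fun i => 0)
    obtain ⟨i, -⟩ := hI
    exact i.elim0
  set y : Fin (n - 1) → G := fun i => w i • x i with hy
  have extract : ∀ T : Finset (Fin (n - 1)), D ≤ T.card →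
      ∃ J ⊆ T, J.Nonempty ∧ ∑ i ∈ J, y i = 0 := by
    intro T hT
    obtain ⟨g⟩ := Function.Embedding.nonempty_of_card_le (α := Fin D) (β := T)
      (by simpa using hT)
    have hginj : Function.Injective fun i => ((g i : Fin (n - 1))) :=
      fun a b hab => g.injective (Subtype.ext hab)
    obtain ⟨I0, hI0ne, hI0sum⟩ := hD1 (fun i => y (g i))
    refine ⟨I0.image (fun i => (g i : Fin (n - 1))), ?_, hI0ne.image _, ?_⟩
    · intro j hj
      simp only [Finset.mem_image] at hj
      obtain ⟨i, -, rfl⟩ := hj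
      exact (g i).2
    · rw [Finset.sum_image (fun a _ b _ h => hginj h)]
      exact hI0sum
  have main : ∀ T : Finset (Fin (n - 1)),
      ∃ I ⊆ T, T.card - (D - 1) ≤ I.card ∧ ∑ i ∈ I, y i = 0 := by
    intro T
    induction T using Finset.strongInduction with
    | _ T ih =>
      by_cases hT : D ≤ T.card
      · obtain ⟨J, hJT, hJne, hJsum⟩ := extract T hT
        have hssub : T \ J ⊂ T := Finset.sdiff_ssubset hJT hJne
        obtain ⟨I', hI'sub, hI'card, hI'sum⟩ := ih _ hssub
        have hdisj : Disjoint I' J := Finset.sdiff_disjoint.mono_left hI'sub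
        refine ⟨I' ∪ J, Finset.union_subset (hI'sub.trans Finset.sdiff_subset) hJT, ?_, ?_⟩
        · have h1 : (T \ J).card = T.card - J.card := Finset.card_sdiff_of_subset hJT
          have h2 : (I' ∪ J).card = I'.card + J.card := Finset.card_union_of_disjoint hdisj
          have h3 : J.card ≤ T.card := Finset.card_le_card hJT
          omega
        · rw [Finset.sum_union hdisj, hI'sum, hJsum, add_zero]
      · exact ⟨∅, Finset.empty_subset _, by omega, by simp⟩
  obtain ⟨I, hIsub, hIcard, hIsum⟩ := main Finset.univ
  have hcard : (Finset.univ : Finset (Fin (n - 1))).card = n - 1 := by simp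
  have hcard2 : Fintype.card (Fin (n - 1)) = n - 1 := Fintype.card_fin _
  refine ⟨I, id, ?_, ?_, fun a _ b _ h => h, hIsum⟩
  · omega
  · have := Finset.card_le_univ I
    omega
end
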